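/- arXiv:1702.06422 — 6 statements merged into one kernel-verified Lean document; each statement's English description precedes it below -/
import Mathlib

section
/- For all n ≥ 1 and p ≥ 0, the p-Bernoulli numbers satisfy ∑_{k=0}^{n} C(n+1, k) B_{k,p} = -p · B_{n,p}. -/
/-!
Put `c_p = (p+1)²/(p+2)` and let `T n p = ∑_{k ≤ n} C(n,k) B_{k,p}` be the binomial transform of
`k ↦ B_{k,p}`. Pascal's rule together with the defining recurrence gives
`T (n+1) p = (p+1) T n p - c_p T n (p+1)`, and with it induction on `n`, for all `p` at once,
proves `T (n+1) p = -c_p B_{n,p+1}` for `n ≥ 1`. Removing the term `k = n+1` from `T (n+1) p`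
and expanding `B_{n+1,p}` by the recurrence gives the theorem.
-/

/-- The p-Bernoulli numbers, defined by the three-term recurrence
`B_{n+1,p} = p·B_{n,p} - ((p+1)²/(p+2))·B_{n,p+1}` with `B_{0,p} = 1`. -/
def pBernoulli : ℕ → ℕ → ℚ
  | 0, _ => 1
  | n + 1, p => p * pBernoulli n p - ((p + 1 : ℚ) ^ 2 / (p + 2)) * pBernoulli n (p + 1)

open Finset

local notation "c" p => ((p + 1 : ℚ) ^ 2 / (p + 2))

@[simp] lemma pBernoulli_zero (p : ℕ) : pBernoulli 0 p = 1 := rfl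

lemma pBernoulli_succ (n p : ℕ) :
    pBernoulli (n + 1) p = p * pBernoulli n p - (c p) * pBernoulli n (p + 1) := rfl

def pBernoulliBinomSum (n p : ℕ) : ℚ :=
  ∑ k ∈ range (n + 1), (n.choose k : ℚ) * pBernoulli k p

lemma pBernoulliBinomSum_succ (n p : ℕ) :
    pBernoulliBinomSum (n + 1) p
      = (p + 1) * pBernoulliBinomSum n p - (c p) * pBernoulliBinomSum n (p + 1) := by
  simp only [pBernoulliBinomSum]
  rw [sum_choose_succ_mul (fun k _ => pBernoulli k p) n]
  simp only [pBernoulli_succ, mul_sum]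
  rw [← sum_add_distrib, ← sum_sub_distrib]
  refine sum_congr rfl fun k _ => ?_
  ring

lemma pBernoulliBinomSum_two (p : ℕ) :
    pBernoulliBinomSum 2 p = -(c p) * pBernoulli 1 (p + 1) := by
  have h2 : (p : ℚ) + 2 ≠ 0 := by positivity
  have h3 : (p : ℚ) + 3 ≠ 0 := by positivity
  simp only [pBernoulliBinomSum, Nat.reduceAdd, sum_range_succ, range_one, sum_singleton,
    Nat.choose_zero_right, Nat.cast_one, pBernoulli_zero, mul_one, Nat.choose_succ_self_right,
    Nat.cast_ofNat, pBernoulli_succ, Nat.choose_self, Nat.cast_add, one_mul, neg_mul]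
  field_simp
  ring

lemma pBernoulliBinomSum_succ_eq (n : ℕ) (hn : 1 ≤ n) (p : ℕ) :
    pBernoulliBinomSum (n + 1) p = -(c p) * pBernoulli n (p + 1) := by
  induction n, hn using Nat.le_induction generalizing p with
  | base => exact pBernoulliBinomSum_two p
  | succ n _ ih =>
    rw [pBernoulliBinomSum_succ, ih, ih, pBernoulli_succ n (p + 1)]
    push_cast
    ring

theorem pBernoulli_recurrence (n p : ℕ) (hn : 1 ≤ n) :
    ∑ k ∈ Finset.range (n + 1), ((n + 1).choose k : ℚ) * pBernoulli k p
      = -(p : ℚ) * pBernoulli n p := by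
  have h := pBernoulliBinomSum_succ_eq n hn p
  rw [pBernoulliBinomSum, sum_range_succ, Nat.choose_self, pBernoulli_succ] at h
  push_cast at h
  linear_combination h
end

section
/- For all non-negative integers n and p, ∫_{-1}^{0} (1+y)^p · w_n(y) dy = B_{n,p}/(p+1), where w_n is the n-th geometric polynomial. -/
def stirling2 : ℕ → ℕ → ℕ
  | 0, 0 => 1
  | 0, _ + 1 => 0
  | _ + 1, 0 => 0
  | n + 1, k + 1 => (k + 1) * stirling2 n (k + 1) + stirling2 n k

/-- The geometric polynomials `w_n(y) = ∑_{k=0}^n S(n,k)·k!·y^k`. -/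
def geomPoly (n : ℕ) (y : ℝ) : ℝ :=
  ∑ k ∈ Finset.range (n + 1), (stirling2 n k : ℝ) * (Nat.factorial k : ℝ) * y ^ k

/-! Expanding `w_n` in monomials reduces the integral `I(n, p) = ∫_{-1}^0 (1+y)^p w_n(y) dy` to
the moments `β(p, k) = ∫_{-1}^0 (1+y)^p y^k dy`. The Stirling recurrence
`S(n+1, k+1) (k+1)! = (k+1) (S(n, k+1) (k+1)! + S(n, k) k!)`, the splitting
`β(p+1, k) = β(p, k) + β(p, k+1)` and the integration by parts
`(p+1) β(p, k+1) + (k+1) β(p+1, k) = 0` give `I(n+1, p) = p I(n, p) - (p+1) I(n, p+1)`.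
Together with `I(0, p) = 1/(p+1)` this is exactly the recurrence defining `B_{n,p}/(p+1)`. -/

open Finset Nat intervalIntegral

theorem stirling2_eq_stirlingSecond : stirling2 = stirlingSecond := by
  funext n k
  induction n generalizing k with
  | zero => cases k <;> rfl
  | succ n ih => cases k <;> simp [stirling2, stirlingSecond, ih]

theorem sum_range_stirlingSecond_succ_mul_factorial {R : Type*} [CommSemiring R] (n : ℕ)
    (f : ℕ → R) :
    ∑ k ∈ range (n + 2), (stirlingSecond (n + 1) k * k ! : R) * f k =
      ∑ k ∈ range (n + 1), (stirlingSecond n k * k ! : R) * (k * f k + (k + 1) * f (k + 1)) := by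
  set g : ℕ → R := fun k ↦ stirlingSecond n k * k ! * (k * f k)
  have hg : ∑ k ∈ range (n + 1), g k = ∑ k ∈ range (n + 1), g (k + 1) := by
    have hlast : g (n + 1) = 0 := by simp [g, stirlingSecond_eq_zero_of_lt]
    have h := sum_range_succ' g (n + 1)
    have hzero : g 0 = 0 := by simp [g]
    rwa [sum_range_succ, hlast, hzero, add_zero, add_zero] at h
  rw [sum_range_succ', stirlingSecond_succ_zero]
  simp only [mul_add, sum_add_distrib, Nat.cast_zero, zero_mul, add_zero]
  change _ = ∑ k ∈ range (n + 1), g k + _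
  rw [hg, ← sum_add_distrib]
  refine sum_congr rfl fun k _ ↦ ?_
  simp only [g, stirlingSecond_succ_succ, factorial_succ]
  push_cast
  ring

/-- `(-1)^k B(p+1, k+1)`, by the substitution `t = 1 + y`. -/
noncomputable def shiftedBeta (p k : ℕ) : ℝ := ∫ y in (-1 : ℝ)..0, (1 + y) ^ p * y ^ k

theorem shiftedBeta_zero_right (p : ℕ) : shiftedBeta p 0 = 1 / (p + 1) := by
  simp [shiftedBeta, integral_comp_add_left (fun y ↦ y ^ p)]

theorem shiftedBeta_succ_left (p k : ℕ) :
    shiftedBeta (p + 1) k = shiftedBeta p k + shiftedBeta p (k + 1) := by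
  rw [shiftedBeta, shiftedBeta, shiftedBeta, ← integral_add]
  · congr 1; ext y; ring
  all_goals exact Continuous.intervalIntegrable (by fun_prop) _ _

theorem shiftedBeta_by_parts (p k : ℕ) :
    (p + 1) * shiftedBeta p (k + 1) + (k + 1) * shiftedBeta (p + 1) k = 0 := by
  -- `(1 + y)^(p+1) y^(k+1)` vanishes at both endpoints.
  have hderiv : ∀ y ∈ Set.uIcc (-1 : ℝ) 0, HasDerivAt (fun y ↦ (1 + y) ^ (p + 1) * y ^ (k + 1))
      ((p + 1) * ((1 + y) ^ p * y ^ (k + 1)) + (k + 1) * ((1 + y) ^ (p + 1) * y ^ k)) y := by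
    intro y _
    refine ((((hasDerivAt_id' y).const_add 1).fun_pow (p + 1)).fun_mul
      (hasDerivAt_pow (k + 1) y)).congr_deriv ?_
    simp only [add_tsub_cancel_right]
    push_cast
    ring
  have h := integral_eq_sub_of_hasDerivAt hderiv
    (Continuous.intervalIntegrable (by fun_prop) _ _)
  rw [integral_add, integral_const_mul, integral_const_mul] at h
  · simpa [shiftedBeta] using h
  all_goals exact Continuous.intervalIntegrable (by fun_prop) _ _

theorem integral_one_add_pow_mul_geomPoly (n p : ℕ) :
    ∫ y in (-1 : ℝ)..0, (1 + y) ^ p * geomPoly n y =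
      ∑ k ∈ range (n + 1), (stirlingSecond n k * k ! : ℝ) * shiftedBeta p k := by
  simp_rw [geomPoly, stirling2_eq_stirlingSecond, mul_sum]
  rw [integral_finsetSum fun k _ ↦ Continuous.intervalIntegrable (by fun_prop) _ _]
  refine sum_congr rfl fun k _ ↦ ?_
  rw [shiftedBeta, ← integral_const_mul]
  congr 1
  ext y
  ring

theorem integral_one_add_pow_mul_geomPoly_succ (n p : ℕ) :
    ∫ y in (-1 : ℝ)..0, (1 + y) ^ p * geomPoly (n + 1) y =
      p * (∫ y in (-1 : ℝ)..0, (1 + y) ^ p * geomPoly n y) -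
        (p + 1) * ∫ y in (-1 : ℝ)..0, (1 + y) ^ (p + 1) * geomPoly n y := by
  simp only [integral_one_add_pow_mul_geomPoly, sum_range_stirlingSecond_succ_mul_factorial,
    mul_sum, ← sum_sub_distrib]
  refine sum_congr rfl fun k _ ↦ ?_
  linear_combination (stirlingSecond n k * k ! : ℝ) *
    (shiftedBeta_by_parts p k + (p - k) * shiftedBeta_succ_left p k)

theorem integral_geomPoly_mul_pow (n p : ℕ) :
    ∫ y in (-1 : ℝ)..0, (1 + y) ^ p * geomPoly n y = (pBernoulli n p : ℝ) / (p + 1) := by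
  induction n generalizing p with
  | zero => simp [integral_one_add_pow_mul_geomPoly, shiftedBeta_zero_right, pBernoulli]
  | succ n ih =>
    rw [integral_one_add_pow_mul_geomPoly_succ, ih, ih, pBernoulli]
    push_cast
    field_simp
    ring
end

section
/- For n > 0, the geometric polynomial satisfies the reflection formula (y+1)·w_n(y) = (-1)^n · y · w_n(-y-1) as an identity of polynomials in y. -/
/-! The Stirling recurrence gives `w_{n+1}(y) = y (1 + y) w_n'(y) + y w_n(y)`. Induct on `n ≥ 1`
from `w_1(y) = y`: differentiating the reflection identity for `w_n` expresses
`w_n(y) + (y + 1) w_n'(y)` through `w_n(-y-1)` and `w_n'(-y-1)`, and multiplying by `y (y + 1)`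
turns it into the reflection identity for `w_{n+1}`, because `y ↦ -y-1` preserves `y (y + 1)`. -/

open Finset Nat

theorem stirling2_eq_zero_of_lt : ∀ {n k : ℕ}, n < k → stirling2 n k = 0
  | 0, _ + 1, _ => rfl
  | n + 1, k + 1, h => by
    rw [stirling2, stirling2_eq_zero_of_lt (by omega), stirling2_eq_zero_of_lt (by omega), mul_zero]

-- The truncated `k - 1` is harmless: the `k = 0` term carries the factor `k`.
noncomputable def geomPolyDeriv (n : ℕ) (y : ℝ) : ℝ :=
  ∑ k ∈ range (n + 1), (stirling2 n k : ℝ) * k ! * (k * y ^ (k - 1))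

theorem hasDerivAt_geomPoly (n : ℕ) (y : ℝ) :
    HasDerivAt (geomPoly n) (geomPolyDeriv n y) y := by
  unfold geomPoly geomPolyDeriv
  exact HasDerivAt.fun_sum fun k _ => (hasDerivAt_pow k y).const_mul _

theorem mul_geomPolyDeriv (n : ℕ) (y : ℝ) :
    y * geomPolyDeriv n y = ∑ k ∈ range (n + 1), (stirling2 n k : ℝ) * k ! * (k * y ^ k) := by
  rw [geomPolyDeriv, mul_sum]
  refine sum_congr rfl fun k _ => ?_
  cases k with
  | zero => simp
  | succ k => rw [Nat.add_sub_cancel, pow_succ]; ring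

theorem geomPoly_one (y : ℝ) : geomPoly 1 y = y := by
  simp [geomPoly, sum_range_succ, stirling2]

theorem geomPoly_succ (n : ℕ) (y : ℝ) :
    geomPoly (n + 1) y = y * (1 + y) * geomPolyDeriv n y + y * geomPoly n y := by
  set a : ℕ → ℝ := fun k => (stirling2 n k : ℝ) * k ! * (k * y ^ k)
  have shift : ∑ i ∈ range (n + 1), a (i + 1) = ∑ k ∈ range (n + 1), a k := by
    have h := (sum_range_succ' a (n + 1)).symm.trans (sum_range_succ a (n + 1))
    simpa [a, stirling2_eq_zero_of_lt n.lt_succ_self] using h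
  have term (i : ℕ) : (stirling2 (n + 1) (i + 1) : ℝ) * (i + 1)! * y ^ (i + 1)
      = a (i + 1) + y * ((stirling2 n i : ℝ) * i ! * y ^ i) + y * a i := by
    simp only [a, stirling2, Nat.factorial_succ]; push_cast; ring
  rw [geomPoly, sum_range_succ', sum_congr rfl fun i _ => term i, sum_add_distrib,
    sum_add_distrib, shift, ← mul_sum, ← mul_sum, ← mul_geomPolyDeriv, ← geomPoly]
  simp only [stirling2, Nat.cast_zero, zero_mul, add_zero]
  ring

theorem reflection_identity_deriv {f f' : ℝ → ℝ} (hf : ∀ y, HasDerivAt f (f' y) y) {s : ℝ}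
    (h : ∀ y, (y + 1) * f y = s * y * f (-y - 1)) (y : ℝ) :
    f y + (y + 1) * f' y = s * (f (-y - 1) - y * f' (-y - 1)) := by
  have hL : HasDerivAt (fun z => (z + 1) * f z) (1 * f y + (y + 1) * f' y) y :=
    ((hasDerivAt_id y).add_const 1).mul (hf y)
  have hR : HasDerivAt (fun z => s * z * f (-z - 1))
      (s * 1 * f (-y - 1) + s * y * (f' (-y - 1) * -1)) y :=
    ((hasDerivAt_id y).const_mul s).mul ((hf _).comp y ((hasDerivAt_neg y).sub_const 1))
  rw [show (fun z => (z + 1) * f z) = fun z => s * z * f (-z - 1) from funext h] at hL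
  linear_combination hL.unique hR

theorem geomPoly_reflection (n : ℕ) (hn : 0 < n) (y : ℝ) :
    (y + 1) * geomPoly n y = (-1) ^ n * y * geomPoly n (-y - 1) := by
  induction n, hn using Nat.le_induction generalizing y with
  | base => rw [geomPoly_one, geomPoly_one]; ring
  | succ n _ ih =>
    have hd := reflection_identity_deriv (hasDerivAt_geomPoly n) ih y
    rw [geomPoly_succ, geomPoly_succ, pow_succ]
    linear_combination y * (y + 1) * hd
end

section
/- For all non-negative integers n and p, B_{n,p+1}(x+1) - B_{n,p+1}(x) = ((p+2)/(p+1)) · (B_{n,p}(x+1) - x^n), as an identity of polynomials in x. -/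
/-- The p-Bernoulli polynomials `B_{n,p}(x) = ∑ C(n,k) x^{n-k} B_{k,p}`. -/
def pBernoulliPoly (n p : ℕ) (x : ℝ) : ℝ :=
  ∑ k ∈ Finset.range (n + 1), (n.choose k : ℝ) * x ^ (n - k) * (pBernoulli k p : ℝ)

/-!
Pascal's rule turns the recursion of the numbers `B_{n,p}` into the recursion
`B_{n+1,p}(x) = (x + p) B_{n,p}(x) - ((p+1)^2/(p+2)) B_{n,p+1}(x)` of the polynomials.
Expanding `B_{n+1,p+1}(x+1) - B_{n+1,p+1}(x)` with it and applying the identity at rank `n`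
for `p` and `p + 1` leaves only terms in `B_{n,p+1}(x+1)` and `x^n`, whose coefficients cancel
because `((p+2)/(p+1)) ((p+1)^2/(p+2)) = p + 1`.
-/

open Finset

theorem pBernoulliPoly_zero (p : ℕ) (x : ℝ) : pBernoulliPoly 0 p x = 1 := by
  simp [pBernoulliPoly, pBernoulli]

theorem pBernoulliPoly_succ (n p : ℕ) (x : ℝ) :
    pBernoulliPoly (n + 1) p x
      = (x + p) * pBernoulliPoly n p x
        - ((p + 1 : ℝ) ^ 2 / (p + 2)) * pBernoulliPoly n (p + 1) x := by
  have pascal := sum_choose_succ_mul (R := ℝ) (fun k j => x ^ j * (pBernoulli k p : ℝ)) n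
  simp only [← mul_assoc] at pascal
  rw [pBernoulliPoly, pascal, add_mul, add_sub_assoc]
  congr 1
  · rw [pBernoulliPoly, mul_sum]
    refine sum_congr rfl fun k hk => ?_
    rw [Nat.sub_add_comm (mem_range_succ_iff.mp hk), pow_succ]
    ring
  · rw [pBernoulliPoly, pBernoulliPoly, mul_sum, mul_sum, ← sum_sub_distrib]
    refine sum_congr rfl fun k _ => ?_
    rw [pBernoulli]
    push_cast
    ring

theorem pBernoulliPoly_telescopic (n p : ℕ) (x : ℝ) :
    pBernoulliPoly n (p + 1) (x + 1) - pBernoulliPoly n (p + 1) x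
      = ((p + 2 : ℝ) / (p + 1)) * (pBernoulliPoly n p (x + 1) - x ^ n) := by
  induction n generalizing p with
  | zero => simp [pBernoulliPoly_zero]
  | succ n ih =>
    have ih_succ := ih (p + 1)
    simp only [pBernoulliPoly_succ, pow_succ]
    push_cast at ih_succ ⊢
    have coeff_succ : (p + 1 + 1 : ℝ) ^ 2 / (p + 1 + 2) * ((p + 1 + 2) / (p + 1 + 1)) = p + 2 := by
      field_simp; ring
    have coeff : (p + 2 : ℝ) / (p + 1) * ((p + 1) ^ 2 / (p + 2)) = p + 1 := by
      field_simp
    have ratio : (p + 2 : ℝ) / (p + 1) * (p + 1) = p + 2 := by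
      field_simp
    linear_combination (x + p + 1) * ih p - ((p + 1 + 1 : ℝ) ^ 2 / (p + 1 + 2)) * ih_succ
      - (pBernoulliPoly n (p + 1) (x + 1) - x ^ n) * coeff_succ
      + pBernoulliPoly n (p + 1) (x + 1) * coeff - x ^ n * ratio
end

section
/- For m ≥ 1 and n, p ≥ 0: m^{n-1} · ∑_{k=0}^{m-1} B_{n,p}(x + k/m) = (p+1)·B_n(mx) - p · ∑_{k=0}^{n} C(n,k) · m^k · B_{n-k}(mx) · B_{k,p} / (k+1), as an identity of polynomials (or functions) in x. -/
/-- Evaluation of the `n`-th Bernoulli polynomial at a real number. -/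
noncomputable def bernoulliPolyR (n : ℕ) (x : ℝ) : ℝ :=
  Polynomial.eval x ((Polynomial.bernoulli n).map (algebraMap ℚ ℝ))

open Finset

theorem sum_range_choose_succ_mul {R : Type*} [Semiring R] (f : ℕ → R) (n : ℕ) :
    ∑ k ∈ range (n + 2), ((n + 2).choose k : R) * f k
      = ∑ k ∈ range (n + 2), ((n + 1).choose k : R) * f k
        + ∑ k ∈ range (n + 1), ((n + 1).choose k : R) * f (k + 1) := by
  rw [sum_range_succ' _ (n + 1), sum_range_succ' (fun k => ((n + 1).choose k : R) * f k) (n + 1)]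
  simp only [Nat.choose_succ_succ', Nat.cast_add, add_mul, sum_add_distrib, Nat.choose_zero_right]
  abel

theorem sum_range_choose_mul_pBernoulli (l p : ℕ) :
    ∑ k ∈ range (l + 1), ((l + 1).choose k : ℚ) * pBernoulli k p
      = (if l = 0 then (p : ℚ) + 1 else 0) - p * pBernoulli l p := by
  induction l generalizing p with
  | zero => simp [pBernoulli]
  | succ l ih =>
    have hshift : ∑ k ∈ range (l + 1), ((l + 1).choose k : ℚ) * pBernoulli (k + 1) p
        = p * ∑ k ∈ range (l + 1), ((l + 1).choose k : ℚ) * pBernoulli k p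
          - (p + 1) ^ 2 / (p + 2)
            * ∑ k ∈ range (l + 1), ((l + 1).choose k : ℚ) * pBernoulli k (p + 1) := by
      simp only [pBernoulli, mul_sum, ← sum_sub_distrib]
      exact sum_congr rfl fun k _ => by ring
    rw [sum_range_choose_succ_mul, sum_range_succ, hshift, ih p, ih (p + 1)]
    have hp : (p : ℚ) + 2 ≠ 0 := by positivity
    simp only [pBernoulli, Nat.choose_self, Nat.cast_one, one_mul, Nat.cast_add, if_false,
      Nat.add_one_ne_zero]
    split_ifs <;> field_simp <;> ring

theorem sum_range_choose_mul_bernoulliFun (r : ℕ) (y : ℝ) :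
    ∑ j ∈ range (r + 1), ((r + 1).choose j : ℝ) * bernoulliFun j y = (r + 1) * y ^ r := by
  have h := congrArg (Polynomial.aeval y) (Polynomial.sum_bernoulli r)
  simp only [map_sum, map_smul, ← Polynomial.eval_map_algebraMap] at h
  simpa [bernoulliFun, Rat.smul_def, add_mul] using h

theorem sum_range_choose_succ_mul_bernoulliFun_sub (r : ℕ) (y : ℝ) :
    ∑ i ∈ range (r + 1), ((r + 1).choose (i + 1) : ℝ) * bernoulliFun (r - i) y
      = (r + 1) * y ^ r := by
  rw [← sum_range_choose_mul_bernoulliFun, ← sum_range_reflect]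
  refine sum_congr rfl fun i hi => ?_
  have hi : i ≤ r := Nat.lt_succ_iff.mp (mem_range.mp hi)
  rw [Nat.add_sub_cancel, Nat.sub_sub_self hi,
    Nat.choose_symm_of_eq_add (by omega : r + 1 = r - i + 1 + i)]

theorem choose_mul_choose_succ_div (n k i : ℕ) :
    (n.choose (k + i) : ℝ) * (k + i + 1).choose k / (k + i + 1)
      = n.choose k * (n - k + 1).choose (i + 1) / ((n - k : ℕ) + 1) := by
  have h1 : ((k + i).choose k : ℝ) * (k + i + 1) = (k + i + 1).choose k * (i + 1) := by
    have := Nat.choose_mul_succ_eq (k + i) k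
    rw [show k + i + 1 - k = i + 1 by omega] at this
    exact_mod_cast this
  have h2 : ((n - k : ℕ) + 1 : ℝ) * (n - k).choose i = (n - k + 1).choose (i + 1) * (i + 1) := by
    exact_mod_cast Nat.add_one_mul_choose_eq (n - k) i
  have h3 : (n.choose (k + i) : ℝ) * (k + i).choose k = n.choose k * (n - k).choose i := by
    have := Nat.choose_mul (n := n) (Nat.le_add_right k i)
    rw [Nat.add_sub_cancel_left] at this
    exact_mod_cast this
  rw [div_eq_div_iff (by positivity) (by positivity)]
  apply mul_right_cancel₀ (by positivity : ((i : ℝ) + 1) ≠ 0)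
  linear_combination -(n.choose (k + i) : ℝ) * ((n - k : ℕ) + 1) * h1
    + ((n - k : ℕ) + 1 : ℝ) * (k + i + 1) * h3 + (n.choose k : ℝ) * (k + i + 1) * h2

theorem sum_Ico_choose_mul_bernoulliFun {n k : ℕ} (hk : k ≤ n) (y : ℝ) :
    ∑ l ∈ Ico k (n + 1), (n.choose l : ℝ) * (l + 1).choose k / (l + 1) * bernoulliFun (n - l) y
      = n.choose k * y ^ (n - k) := by
  rw [sum_Ico_eq_sum_range, show n + 1 - k = n - k + 1 by omega]
  have hN : ((n - k : ℕ) : ℝ) + 1 ≠ 0 := by positivity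
  calc _ = (n.choose k : ℝ) / ((n - k : ℕ) + 1) * ∑ i ∈ range (n - k + 1),
        ((n - k + 1).choose (i + 1) : ℝ) * bernoulliFun (n - k - i) y := by
        rw [mul_sum]
        refine sum_congr rfl fun i _ => ?_
        push_cast
        rw [choose_mul_choose_succ_div, Nat.sub_sub]
        ring
    _ = n.choose k * y ^ (n - k) := by
        rw [sum_range_choose_succ_mul_bernoulliFun_sub]
        field_simp

theorem sum_choose_mul_pow_eq_sum_bernoulliFun (a : ℕ → ℝ) (n : ℕ) (y : ℝ) :
    ∑ k ∈ range (n + 1), (n.choose k : ℝ) * y ^ (n - k) * a k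
      = ∑ l ∈ range (n + 1), (n.choose l : ℝ) / (l + 1)
          * (∑ k ∈ range (l + 1), ((l + 1).choose k : ℝ) * a k) * bernoulliFun (n - l) y := by
  calc _ = ∑ k ∈ range (n + 1), (∑ l ∈ Ico k (n + 1),
        (n.choose l : ℝ) * (l + 1).choose k / (l + 1) * bernoulliFun (n - l) y) * a k := by
        refine sum_congr rfl fun k hk => ?_
        rw [sum_Ico_choose_mul_bernoulliFun (Nat.lt_succ_iff.mp (mem_range.mp hk))]
    _ = ∑ l ∈ range (n + 1), ∑ k ∈ range (l + 1),
        (n.choose l : ℝ) * (l + 1).choose k / (l + 1) * bernoulliFun (n - l) y * a k := by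
        simp_rw [sum_mul, range_eq_Ico]
        exact sum_Ico_Ico_comm 0 (n + 1) _
    _ = _ := by
        simp_rw [mul_sum, sum_mul]
        refine sum_congr rfl fun l _ => sum_congr rfl fun k _ => ?_
        ring

theorem pBernoulliPoly_eq_sub_sum_bernoulliFun (n p : ℕ) (y : ℝ) :
    pBernoulliPoly n p y = (p + 1) * bernoulliFun n y
      - p * ∑ k ∈ range (n + 1),
          (n.choose k : ℝ) * bernoulliFun (n - k) y * pBernoulli k p / (k + 1) := by
  have hsum (l : ℕ) : ∑ k ∈ range (l + 1), ((l + 1).choose k : ℝ) * pBernoulli k p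
      = (if l = 0 then (p : ℝ) + 1 else 0) - p * pBernoulli l p := by
    have h := congrArg (Rat.cast : ℚ → ℝ) (sum_range_choose_mul_pBernoulli l p)
    push_cast [apply_ite] at h
    exact h
  rw [pBernoulliPoly, sum_choose_mul_pow_eq_sum_bernoulliFun]
  simp only [hsum, mul_sub, sub_mul, sum_sub_distrib, mul_ite, ite_mul, mul_zero, zero_mul,
    sum_ite_eq', mem_range, mul_sum]
  rw [if_pos n.succ_pos]
  congr 1
  · simp
  · exact sum_congr rfl fun k _ => by ring

theorem pBernoulliPoly_raabe (n p m : ℕ) (hm : 1 ≤ m) (x : ℝ) :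
    (m : ℝ) ^ ((n : ℤ) - 1) * ∑ k ∈ Finset.range m, pBernoulliPoly n p (x + k / m)
      = (p + 1 : ℝ) * bernoulliPolyR n (m * x)
        - (p : ℝ) * ∑ k ∈ Finset.range (n + 1),
            (n.choose k : ℝ) * (m : ℝ) ^ k * bernoulliPolyR (n - k) (m * x)
              * (pBernoulli k p : ℝ) / (k + 1) := by
  have hm0 : (m : ℝ) ≠ 0 := by positivity
  rw [show bernoulliPolyR = bernoulliFun from rfl, zpow_sub₀ hm0, zpow_natCast, zpow_one]
  simp only [bernoulliFun_mul _ (by omega : m ≠ 0), pBernoulliPoly_eq_sub_sum_bernoulliFun,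
    mul_sum, sum_mul, sum_div, mul_sub, sum_sub_distrib]
  rw [sum_comm]
  congr 1
  · exact sum_congr rfl fun k _ => by ring
  · refine sum_congr rfl fun j hj => sum_congr rfl fun k _ => ?_
    have hpow : (m : ℝ) ^ n = m ^ j * m ^ (n - j) := by
      rw [← pow_add, Nat.add_sub_cancel' (Nat.lt_succ_iff.mp (mem_range.mp hj))]
    rw [hpow]
    ring
end

section
/- For m ≥ 1 and n ≥ 0: ∑_{k=0}^{n} C(n,k) · m^k · B_{k+1} · B_{n-k} / (k+1) = (-m·B_n - B_{n+1})/m + m^{n-1} · ∑_{k=0}^{m-1} (k/m) · B_n(k/m). -/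
/-!
With `β(t) = t / (eᵗ - 1) = ∑ Bₙ tⁿ / n!`, the left-hand side is `n! / m` times the coefficient of
`tⁿ⁺¹` in `(β(mt) - 1) β(t)`, and `∑ₙ mⁿ Bₙ(k/m) tⁿ / n! = β(mt) eᵏᵗ`. So the theorem is the
coefficient of `tⁿ⁺¹` in the power series identity
`m (β(mt) - 1) β(t) = t (β(mt) ∑_{k<m} k eᵏᵗ - m² β(t) - m β'(t))`,
which holds after multiplication by `(eᵐᵗ - 1)(eᵗ - 1)` because of `β(t)(eᵗ - 1) = t`, its rescaling
`β(mt)(eᵐᵗ - 1) = mt`, its derivative, and the two geometric sums `∑_{k<m} eᵏᵗ` and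
`∑_{k<m} k eᵏᵗ`.
-/

section

open Finset PowerSeries Nat

variable (A : Type*) [CommRing A] [Algebra ℚ A]

namespace PowerSeries

theorem exp_sub_one_ne_zero [Nontrivial A] : exp A - 1 ≠ 0 := by
  intro h
  simpa using congrArg (coeff 1) h

theorem exp_pow_sub_one_ne_zero [CharZero A] {m : ℕ} (hm : m ≠ 0) : exp A ^ m - 1 ≠ 0 := by
  intro h
  simpa [exp_pow_eq_rescale_exp, hm] using congrArg (coeff 1) h

end PowerSeries

theorem rescale_bernoulliPowerSeries_mul_exp_pow_sub_one (m : ℕ) :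
    rescale (m : A) (bernoulliPowerSeries A) * (exp A ^ m - 1) = C (m : A) * X := by
  have h := congrArg (rescale (m : A)) (bernoulliPowerSeries_mul_exp_sub_one A)
  rwa [map_mul, map_sub, map_one, rescale_X, ← exp_pow_eq_rescale_exp] at h

theorem derivative_bernoulliPowerSeries_mul_exp_sub_one :
    d⁄dX A (bernoulliPowerSeries A) * (exp A - 1) = 1 - bernoulliPowerSeries A * exp A := by
  have h := congrArg (d⁄dX A) (bernoulliPowerSeries_mul_exp_sub_one A)
  rw [Derivation.leibniz, map_sub, derivative_exp, derivative_one, derivative_X, smul_eq_mul,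
    smul_eq_mul, sub_zero] at h
  linear_combination h

theorem sum_range_natCast_mul_pow_mul_sub_one {R : Type*} [CommRing R] (x : R) (m : ℕ) :
    (∑ k ∈ range m, (k : R) * x ^ k) * (x - 1) = m * x ^ m - x * ∑ k ∈ range m, x ^ k := by
  induction m with
  | zero => simp
  | succ m ih =>
    rw [sum_range_succ, sum_range_succ, add_mul, ih]
    push_cast
    ring

local notation "β" => bernoulliPowerSeries ℚ
local notation "𝔼" => PowerSeries.exp ℚ

theorem bernoulliPowerSeries_mul_rescale_exp (x : ℚ) :
    β * rescale x 𝔼 = mk fun n => (Polynomial.bernoulli n).eval x / n ! := by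
  refine mul_right_cancel₀ (exp_sub_one_ne_zero ℚ) ?_
  have h := Polynomial.bernoulli_generating_function x
  simp only [one_div, Polynomial.coe_aeval_eq_eval, Polynomial.eval_smul, smul_eq_mul] at h
  rw [mul_right_comm, bernoulliPowerSeries_mul_exp_sub_one, ← h]
  congr 2 with n
  ring

theorem rescale_bernoulliPowerSeries_mul_exp_pow {m : ℕ} (hm : m ≠ 0) (k : ℕ) :
    rescale (m : ℚ) β * 𝔼 ^ k
      = mk fun n => (m : ℚ) ^ n * (Polynomial.bernoulli n).eval ((k : ℚ) / m) / n ! := by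
  have hk : rescale (k : ℚ) 𝔼 = rescale (m : ℚ) (rescale ((k : ℚ) / m) 𝔼) := by
    rw [rescale_rescale, div_mul_cancel₀ _ (Nat.cast_ne_zero.mpr hm)]
  rw [exp_pow_eq_rescale_exp, hk, ← map_mul, bernoulliPowerSeries_mul_rescale_exp, rescale_mk]
  simp only [mul_div_assoc]

theorem bernoulli_convolution_generating_function {m : ℕ} (hm : m ≠ 0) :
    C (m : ℚ) * ((rescale (m : ℚ) β - 1) * β)
      = X * (rescale (m : ℚ) β * ∑ k ∈ range m, (k : ℚ⟦X⟧) * 𝔼 ^ k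
        - C ((m : ℚ) ^ 2) * β - C (m : ℚ) * d⁄dX ℚ β) := by
  refine mul_right_cancel₀ (mul_ne_zero (exp_pow_sub_one_ne_zero ℚ hm) (exp_sub_one_ne_zero ℚ)) ?_
  have hβ := bernoulliPowerSeries_mul_exp_sub_one ℚ
  have hβm := rescale_bernoulliPowerSeries_mul_exp_pow_sub_one ℚ m
  have hβ' := derivative_bernoulliPowerSeries_mul_exp_sub_one ℚ
  have hS := geom_sum_mul 𝔼 m
  have hT := sum_range_natCast_mul_pow_mul_sub_one 𝔼 m
  set βm := rescale (m : ℚ) β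
  set S := ∑ k ∈ range m, 𝔼 ^ k
  set T := ∑ k ∈ range m, (k : ℚ⟦X⟧) * 𝔼 ^ k
  set F := 𝔼 ^ m - 1
  simp only [map_pow, map_natCast] at hβm ⊢
  linear_combination (m * β * (𝔼 - 1) - X * T * (𝔼 - 1)) * hβm
    + (m ^ 2 * X - m * F + m ^ 2 * X * F - m * X * 𝔼 * S) * hβ
    - m * X ^ 2 * hT + m * X * F * hβ' + m * X * β * 𝔼 * hS

theorem coeff_succ_rescale_bernoulliPowerSeries_sub_one_mul (a : ℚ) (n : ℕ) :
    coeff (n + 1) ((rescale a β - 1) * β)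
      = a * (∑ k ∈ range (n + 1),
          (n.choose k : ℚ) * a ^ k * bernoulli (k + 1) * bernoulli (n - k) / (k + 1)) / n ! := by
  rw [coeff_mul, Nat.sum_antidiagonal_succ, Nat.sum_antidiagonal_eq_sum_range_succ_mk,
    mul_sum, sum_div]
  simp only [bernoulliPowerSeries, map_sub, coeff_rescale, coeff_one, coeff_mk,
    Algebra.algebraMap_self, RingHom.id_apply, pow_zero, bernoulli_zero, factorial_zero, cast_one,
    div_one, mul_one, ↓reduceIte, sub_self, zero_mul, zero_add, Nat.add_eq_zero_iff, one_ne_zero,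
    and_false, sub_zero]
  refine sum_congr rfl fun k hk => ?_
  rw [Nat.cast_choose ℚ (Nat.lt_succ_iff.mp (mem_range.mp hk)), Nat.factorial_succ]
  push_cast
  field_simp
  ring

theorem coeff_rescale_bernoulliPowerSeries_mul_sum {m : ℕ} (hm : m ≠ 0) (n : ℕ) :
    coeff n (rescale (m : ℚ) β * ∑ k ∈ range m, (k : ℚ⟦X⟧) * 𝔼 ^ k)
      = (m : ℚ) ^ n * (∑ k ∈ range m, k * (Polynomial.bernoulli n).eval ((k : ℚ) / m)) / n ! := by
  rw [mul_sum, map_sum, mul_sum, sum_div]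
  refine sum_congr rfl fun k _ => ?_
  rw [mul_left_comm, ← map_natCast (C (R := ℚ)), coeff_C_mul,
    rescale_bernoulliPowerSeries_mul_exp_pow hm, coeff_mk]
  ring

theorem sq_mul_sum_choose_mul_bernoulli_mul_bernoulli {m : ℕ} (hm : m ≠ 0) (n : ℕ) :
    (m : ℚ) ^ 2 * ∑ k ∈ range (n + 1),
        (n.choose k : ℚ) * (m : ℚ) ^ k * bernoulli (k + 1) * bernoulli (n - k) / (k + 1)
      = (m : ℚ) ^ n * ∑ k ∈ range m, k * (Polynomial.bernoulli n).eval ((k : ℚ) / m)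
        - (m : ℚ) ^ 2 * bernoulli n - m * bernoulli (n + 1) := by
  have key := congrArg (coeff (n + 1)) (bernoulli_convolution_generating_function hm)
  rw [coeff_C_mul, coeff_succ_rescale_bernoulliPowerSeries_sub_one_mul, coeff_succ_X_mul,
    map_sub, map_sub, coeff_C_mul, coeff_C_mul, coeff_derivative,
    coeff_rescale_bernoulliPowerSeries_mul_sum hm] at key
  simp only [bernoulliPowerSeries, coeff_mk, Algebra.algebraMap_self, RingHom.id_apply,
    Nat.factorial_succ] at key
  push_cast at key
  field_simp at key
  linear_combination key

end

theorem bernoulli_convolution (n m : ℕ) (hm : 1 ≤ m) :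
    ∑ k ∈ Finset.range (n + 1),
        (n.choose k : ℚ) * (m : ℚ) ^ k * bernoulli (k + 1) * bernoulli (n - k) / (k + 1)
      = (-(m : ℚ) * bernoulli n - bernoulli (n + 1)) / m
        + (m : ℚ) ^ ((n : ℤ) - 1) * ∑ k ∈ Finset.range m,
            ((k : ℚ) / m) * Polynomial.eval ((k : ℚ) / m) (Polynomial.bernoulli n) := by
  have key := sq_mul_sum_choose_mul_bernoulli_mul_bernoulli (by omega : m ≠ 0) n
  have hm' : (m : ℚ) ≠ 0 := by positivity
  rw [zpow_sub_one₀ hm', zpow_natCast]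
  simp only [div_mul_eq_mul_div, ← Finset.sum_div]
  field_simp
  linear_combination key
end
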